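/- arXiv:0906.4271 — 6 statements merged into one kernel-verified Lean document; each statement's English description precedes it below -/
import Mathlib

section
/- Let X be a finite set and let 𝒞 be a collection of 3-element subsets of X with ∪𝒞 = X. Suppose 𝒞 satisfies: for every nonempty subcollection 𝒞' ⊆ 𝒞, |∪𝒞'| ≥ |𝒞'| + 2. Then the collection 𝒫 of nonempty subcollections 𝒞' ⊆ 𝒞 satisfying |∪𝒞'| = |𝒞'| + 2 forms a patchwork: if 𝒞₁, 𝒞₂ ∈ 𝒫 and 𝒞₁ ∩ 𝒞₂ ≠ ∅, then 𝒞₁ ∩ 𝒞₂ ∈ 𝒫 and 𝒞₁ ∪ 𝒞₂ ∈ 𝒫. -/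
/-!
The surplus `|⋃ 𝒞'| - |𝒞'|` is submodular: the union part is submodular in `𝒞'` and the
cardinality part is modular. Since the surplus is at least `2` on every nonempty subcollection,
two subcollections of surplus exactly `2` that overlap force surplus `2` on their union and on
their intersection.
-/

theorem Finset.card_sup_union_add_card_sup_inter_le {ι α : Type*} [DecidableEq ι] [DecidableEq α]
    (s t : Finset ι) (f : ι → Finset α) :
    ((s ∪ t).sup f).card + ((s ∩ t).sup f).card ≤ (s.sup f).card + (t.sup f).card := by
  have hsup_inter : (s ∩ t).sup f ⊆ s.sup f ∩ t.sup f :=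
    Finset.subset_inter (Finset.sup_mono Finset.inter_subset_left)
      (Finset.sup_mono Finset.inter_subset_right)
  calc ((s ∪ t).sup f).card + ((s ∩ t).sup f).card
      ≤ (s.sup f ∪ t.sup f).card + (s.sup f ∩ t.sup f).card := by
        rw [Finset.sup_union]
        exact Nat.add_le_add_left (Finset.card_le_card hsup_inter) _
    _ = (s.sup f).card + (t.sup f).card := Finset.card_union_add_card_inter _ _

theorem stmt_0_general {α : Type*} [DecidableEq α] (C : Finset (Finset α))
    (hall : ∀ C' ⊆ C, C'.Nonempty → (C'.sup id).card ≥ C'.card + 2)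
    (C1 C2 : Finset (Finset α))
    (h1 : C1 ⊆ C ∧ C1.Nonempty ∧ (C1.sup id).card = C1.card + 2)
    (h2 : C2 ⊆ C ∧ C2.Nonempty ∧ (C2.sup id).card = C2.card + 2)
    (hint : (C1 ∩ C2).Nonempty) :
    ((C1 ∩ C2) ⊆ C ∧ (C1 ∩ C2).Nonempty ∧ ((C1 ∩ C2).sup id).card = (C1 ∩ C2).card + 2) ∧
    ((C1 ∪ C2) ⊆ C ∧ (C1 ∪ C2).Nonempty ∧ ((C1 ∪ C2).sup id).card = (C1 ∪ C2).card + 2) := by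
  obtain ⟨h1C, h1ne, h1tight⟩ := h1
  obtain ⟨h2C, h2ne, h2tight⟩ := h2
  have hinterC : C1 ∩ C2 ⊆ C := Finset.inter_subset_left.trans h1C
  have hunionC : C1 ∪ C2 ⊆ C := Finset.union_subset h1C h2C
  have hunion_ne : (C1 ∪ C2).Nonempty := h1ne.mono Finset.subset_union_left
  have hsubmod := Finset.card_sup_union_add_card_sup_inter_le C1 C2 id
  have hmod := Finset.card_union_add_card_inter C1 C2
  have hunion_ge := hall _ hunionC hunion_ne
  have hinter_ge := hall _ hinterC hint
  exact ⟨⟨hinterC, hint, by omega⟩, ⟨hunionC, hunion_ne, by omega⟩⟩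

theorem stmt_0 {α : Type*} [DecidableEq α] (X : Finset α) (C : Finset (Finset α))
    (hcard : ∀ S ∈ C, S.card = 3) (hunion : C.sup id = X)
    (hall : ∀ C' ⊆ C, C'.Nonempty → (C'.sup id).card ≥ C'.card + 2)
    (C1 C2 : Finset (Finset α))
    (h1 : C1 ⊆ C ∧ C1.Nonempty ∧ (C1.sup id).card = C1.card + 2)
    (h2 : C2 ⊆ C ∧ C2.Nonempty ∧ (C2.sup id).card = C2.card + 2)
    (hint : (C1 ∩ C2).Nonempty) :
    ((C1 ∩ C2) ⊆ C ∧ (C1 ∩ C2).Nonempty ∧ ((C1 ∩ C2).sup id).card = (C1 ∩ C2).card + 2) ∧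
    ((C1 ∪ C2) ⊆ C ∧ (C1 ∪ C2).Nonempty ∧ ((C1 ∪ C2).sup id).card = (C1 ∪ C2).card + 2) :=
  stmt_0_general C hall C1 C2 h1 h2 hint
end

section
/- Let 𝒞₁, 𝒞₂ be finite collections of finite sets. Then |∪(𝒞₁ ∩ 𝒞₂)| + |∪(𝒞₁ ∪ 𝒞₂)| ≤ |(∪𝒞₁) ∩ (∪𝒞₂)| + |(∪𝒞₁) ∪ (∪𝒞₂)| = |∪𝒞₁| + |∪𝒞₂|. -/
theorem Finset.sup_inter_le_inf_sup {α β : Type*} [DecidableEq α] [Lattice β] [OrderBot β]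
    (s₁ s₂ : Finset α) (f : α → β) : (s₁ ∩ s₂).sup f ≤ s₁.sup f ⊓ s₂.sup f :=
  le_inf (sup_mono inter_subset_left) (sup_mono inter_subset_right)

theorem stmt_1 {α : Type*} [DecidableEq α] (C1 C2 : Finset (Finset α)) :
    (((C1 ∩ C2).sup id).card + ((C1 ∪ C2).sup id).card ≤
      ((C1.sup id) ∩ (C2.sup id)).card + ((C1.sup id) ∪ (C2.sup id)).card) ∧
    ((C1.sup id) ∩ (C2.sup id)).card + ((C1.sup id) ∪ (C2.sup id)).card =
      (C1.sup id).card + (C2.sup id).card := by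
  refine ⟨?_, Finset.card_inter_add_card_union _ _⟩
  rw [Finset.sup_union]
  exact add_le_add_left (Finset.card_le_card (Finset.sup_inter_le_inf_sup C1 C2 id)) _
end

section
/- Let T be a finite tree whose leaf set is X, with all non-leaf vertices of degree 3, and let 𝒞 be a collection of 3-element subsets of X with ∪𝒞 = X such that the map S ↦ med_T(S) from 𝒞 to the interior vertices of T is injective. Then for every nonempty subcollection 𝒞' ⊆ 𝒞, |∪𝒞'| ≥ |𝒞'| + 2. -/
/-!
Root the tree at a leaf `r ∈ S₀` for some `S₀ ∈ 𝒞'`. For each `S ∈ 𝒞'`, the median `m = med(S)` is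
also the median of `r` and two elements `u ≠ v` of `S`, none of them equal to `r` since `m` is not a
leaf; so `m` is the branching point of `u` and `v` seen from `r`. Distinct such branching points
of a set `L` of vertices number at most `|L| - 1`: the branching point `m₁` farthest from `r`, with
witnesses `u₀, v₁`, can be removed together with `u₀`, because any other branching point
witnessed by `u₀` is also witnessed by `v₁`. With `L = ⋃𝒞' \ {r}` and injectivity of the median
map this gives `|𝒞'| ≤ |⋃𝒞'| - 2`.
-/

/-- `m` is the median of the finite vertex set `S` in the graph `T`:
it lies on the (shortest) path between every pair of distinct elements of `S`. -/
def isMedianOf {V : Type*} (T : SimpleGraph V) (S : Finset V) (m : V) : Prop :=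
  ∀ x ∈ S, ∀ y ∈ S, x ≠ y → T.dist x m + T.dist m y = T.dist x y

open Finset

namespace SimpleGraph

variable {V : Type*} {G : SimpleGraph V}

def Between (G : SimpleGraph V) (a m b : V) : Prop :=
  G.dist a m + G.dist m b = G.dist a b

def IsMedian (G : SimpleGraph V) (a b c m : V) : Prop :=
  G.Between a m b ∧ G.Between a m c ∧ G.Between b m c

theorem Between.symm {a m b : V} (h : G.Between a m b) : G.Between b m a := by
  have c₁ : G.dist a m = G.dist m a := dist_comm
  have c₂ : G.dist m b = G.dist b m := dist_comm
  have c₃ : G.dist a b = G.dist b a := dist_comm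
  unfold Between at *
  omega

theorem Connected.between_self_iff (hG : G.Connected) {a m : V} :
    G.Between a m a ↔ m = a := by
  refine ⟨fun h => ?_, fun h => by simp [Between, h]⟩
  have : G.dist a m = 0 := by unfold Between at h; simp only [dist_self] at h; omega
  exact (hG.dist_eq_zero_iff.1 this).symm

theorem Between.trans (hG : G.Connected) {a b c d : V} (h₁ : G.Between a b c)
    (h₂ : G.Between a c d) : G.Between a b d := by
  have t₁ : G.dist a d ≤ G.dist a b + G.dist b d := hG.dist_triangle
  have t₂ : G.dist b d ≤ G.dist b c + G.dist c d := hG.dist_triangle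
  unfold Between at *
  omega

theorem Walk.between_of_mem_support [DecidableEq V] {a b m : V} {p : G.Walk a b}
    (hp : p.length = G.dist a b) (hm : m ∈ p.support) : G.Between a m b := by
  have h₁ : G.dist a m ≤ (p.takeUntil m hm).length := dist_le _
  have h₂ : G.dist m b ≤ (p.dropUntil m hm).length := dist_le _
  have hsplit : (p.takeUntil m hm).length + (p.dropUntil m hm).length = p.length := by
    rw [← Walk.length_append, p.take_spec hm]
  have htri : G.dist a b ≤ G.dist a m + G.dist m b :=
    (p.takeUntil m hm).reachable.dist_triangle_left b
  unfold Between
  omega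

namespace IsTree

variable (hG : G.IsTree)
include hG

theorem mem_support_of_between {a b m : V} (h : G.Between a m b) {p : G.Walk a b}
    (hp : p.IsPath) : m ∈ p.support := by
  obtain ⟨q, -, hql⟩ := hG.connected.exists_path_of_dist a m
  obtain ⟨s, -, hsl⟩ := hG.connected.exists_path_of_dist m b
  have hqs : (q.append s).length = G.dist a b := by rw [Walk.length_append, hql, hsl]; exact h
  rw [(hG.existsUnique_path a b).unique hp (q.append s |>.isPath_of_length_eq_dist hqs),
    Walk.mem_support_append_iff]
  exact Or.inl q.end_mem_support

theorem between_or_between {a b m : V} (h : G.Between a m b) (c : V) :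
    G.Between a m c ∨ G.Between c m b := by
  classical
  obtain ⟨p, -, hpl⟩ := hG.connected.exists_path_of_dist a c
  obtain ⟨q, -, hql⟩ := hG.connected.exists_path_of_dist c b
  have hm := (p.append q).support_bypass_subset_support
    (hG.mem_support_of_between h (p.append q).bypass_isPath)
  rcases (Walk.mem_support_append_iff _ _).1 hm with hm | hm
  · exact Or.inl (Walk.between_of_mem_support hpl hm)
  · exact Or.inr (Walk.between_of_mem_support hql hm)

theorem between_of_dist_le {r u m m' : V} (h : G.Between r m u) (h' : G.Between r m' u)
    (hle : G.dist r m ≤ G.dist r m') : G.Between r m m' := by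
  rcases hG.between_or_between h m' with h'' | h''
  · exact h''
  · have hm : m' = m := by
      refine hG.connected.dist_eq_zero_iff.1 ?_
      unfold Between at *
      omega
    subst hm
    simp [Between]

theorem isMedian_unique {r u v m m' : V} (h : G.IsMedian r u v m) (h' : G.IsMedian r u v m') :
    m = m' := by
  wlog hle : G.dist r m ≤ G.dist r m' generalizing m m'
  · exact (this h' h (le_of_not_ge hle)).symm
  obtain ⟨hu, hv, huv⟩ := h
  obtain ⟨hu', hv', huv'⟩ := h'
  have hmm' := hG.between_of_dist_le hu hu' hle
  refine hG.connected.dist_eq_zero_iff.1 ?_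
  have c₁ : G.dist u m = G.dist m u := dist_comm
  have c₂ : G.dist u m' = G.dist m' u := dist_comm
  unfold Between at *
  omega

theorem isMedian_or_isMedian_or_isMedian {x y z m : V} (h : G.IsMedian x y z m) (r : V) :
    G.IsMedian r x y m ∨ G.IsMedian r x z m ∨ G.IsMedian r y z m := by
  obtain ⟨hxy, hxz, hyz⟩ := h
  have bxy := (hG.between_or_between hxy r).imp_left Between.symm
  have bxz := (hG.between_or_between hxz r).imp_left Between.symm
  have byz := (hG.between_or_between hyz r).imp_left Between.symm
  unfold IsMedian
  tauto

theorem isMedian_of_isMedian_of_dist_le {r u v v₁ m m₁ : V} (hne : m ≠ m₁)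
    (hle : G.dist r m ≤ G.dist r m₁) (h₁ : G.IsMedian r u v₁ m₁) (h : G.IsMedian r u v m) :
    v₁ ≠ v ∧ G.IsMedian r v₁ v m := by
  have hrv₁ : G.Between r m v₁ := (hG.between_of_dist_le h.1 h₁.1 hle).trans hG.connected h₁.2.1
  refine ⟨by rintro rfl; exact hne (hG.isMedian_unique h h₁), hrv₁, h.2.1, ?_⟩
  refine (hG.between_or_between h.2.2 v₁).resolve_left fun huv₁ => hne ?_
  exact hG.isMedian_unique ⟨h.1, hrv₁, huv₁⟩ h₁

theorem card_lt_card_of_forall_isMedian [DecidableEq V] (r : V) {L M : Finset V}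
    (hM : M.Nonempty) (hmed : ∀ m ∈ M, ∃ u ∈ L, ∃ v ∈ L, u ≠ v ∧ G.IsMedian r u v m) :
    M.card < L.card := by
  induction M using Finset.induction_on_max_value (G.dist r) generalizing L with
  | empty => simp at hM
  | insert m₁ M hm₁ hmax ih =>
    obtain ⟨u₀, hu₀, v₁, hv₁, hu₀v₁, h₁⟩ := hmed m₁ (mem_insert_self _ _)
    rw [card_insert_of_notMem hm₁]
    rcases M.eq_empty_or_nonempty with rfl | hM
    · exact one_lt_card.2 ⟨u₀, hu₀, v₁, hv₁, hu₀v₁⟩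
    suffices M.card < (L.erase u₀).card by rw [card_erase_of_mem hu₀] at this; omega
    refine ih hM fun m hm => ?_
    have hne : m ≠ m₁ := fun h => hm₁ (h ▸ hm)
    obtain ⟨u, hu, v, hv, huv, h⟩ := hmed m (mem_insert_of_mem hm)
    by_cases huu₀ : u = u₀
    · subst huu₀
      obtain ⟨hv₁v, h'⟩ := hG.isMedian_of_isMedian_of_dist_le hne (hmax m hm) h₁ h
      exact ⟨v₁, mem_erase.2 ⟨hu₀v₁.symm, hv₁⟩, v, mem_erase.2 ⟨huv.symm, hv⟩, hv₁v, h'⟩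
    by_cases hvu₀ : v = u₀
    · subst hvu₀
      have hvu : G.IsMedian r v u m := ⟨h.2.1, h.1, h.2.2.symm⟩
      obtain ⟨hv₁u, h'⟩ := hG.isMedian_of_isMedian_of_dist_le hne (hmax m hm) h₁ hvu
      exact ⟨v₁, mem_erase.2 ⟨hu₀v₁.symm, hv₁⟩, u, mem_erase.2 ⟨huu₀, hu⟩, hv₁u, h'⟩
    exact ⟨u, mem_erase.2 ⟨huu₀, hu⟩, v, mem_erase.2 ⟨hvu₀, hv⟩, huv, h⟩

theorem exists_isMedian_of_isMedianOf [DecidableEq V] {S : Finset V} {m : V} (hS : S.card = 3)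
    (hm : isMedianOf G S m) (r : V) : ∃ u ∈ S, ∃ v ∈ S, u ≠ v ∧ G.IsMedian r u v m := by
  obtain ⟨x, y, z, hxy, hxz, hyz, rfl⟩ := card_eq_three.1 hS
  have hmxyz : G.IsMedian x y z m := ⟨hm x (by simp) y (by simp) hxy,
    hm x (by simp) z (by simp) hxz, hm y (by simp) z (by simp) hyz⟩
  rcases hG.isMedian_or_isMedian_or_isMedian hmxyz r with h | h | h
  · exact ⟨x, by simp, y, by simp, hxy, h⟩
  · exact ⟨x, by simp, z, by simp, hxz, h⟩
  · exact ⟨y, by simp, z, by simp, hyz, h⟩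

end IsTree

end SimpleGraph

theorem stmt_3_general {V : Type*} [DecidableEq V]
    (T : SimpleGraph V) (hT : T.IsTree)
    (X : Finset V)
    (C : Finset (Finset V)) (hcard : ∀ S ∈ C, S.card = 3) (hunion : C.sup id = X)
    (f : Finset V → V)
    (hf : ∀ S ∈ C, isMedianOf T S (f S) ∧ f S ∉ X)
    (hinj : ∀ S₁ ∈ C, ∀ S₂ ∈ C, f S₁ = f S₂ → S₁ = S₂) :
    ∀ C' ⊆ C, C'.Nonempty → (C'.sup id).card ≥ C'.card + 2 := by
  intro C' hC' ⟨S₀, hS₀⟩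
  obtain ⟨r, hr⟩ : S₀.Nonempty := card_pos.1 (by rw [hcard S₀ (hC' hS₀)]; norm_num)
  have hrU : r ∈ C'.sup id := mem_sup.2 ⟨S₀, hS₀, hr⟩
  have hrX : r ∈ X := hunion ▸ mem_sup.2 ⟨S₀, hC' hS₀, hr⟩
  have hmed : ∀ m ∈ C'.image f, ∃ u ∈ (C'.sup id).erase r, ∃ v ∈ (C'.sup id).erase r,
      u ≠ v ∧ T.IsMedian r u v m := by
    simp only [mem_image]
    rintro _ ⟨S, hS, rfl⟩
    have hfr : f S ≠ r := fun h => (hf S (hC' hS)).2 (h ▸ hrX)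
    obtain ⟨u, hu, v, hv, huv, h⟩ :=
      hT.exists_isMedian_of_isMedianOf (hcard S (hC' hS)) (hf S (hC' hS)).1 r
    refine ⟨u, mem_erase.2 ⟨?_, mem_sup.2 ⟨S, hS, hu⟩⟩,
      v, mem_erase.2 ⟨?_, mem_sup.2 ⟨S, hS, hv⟩⟩, huv, h⟩
    · rintro rfl; exact hfr (hT.connected.between_self_iff.1 h.1)
    · rintro rfl; exact hfr (hT.connected.between_self_iff.1 h.2.1)
  have hlt := hT.card_lt_card_of_forall_isMedian r ⟨f S₀, mem_image_of_mem f hS₀⟩ hmed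
  rw [card_image_of_injOn fun S₁ h₁ S₂ h₂ => hinj S₁ (hC' h₁) S₂ (hC' h₂),
    card_erase_of_mem hrU] at hlt
  omega

theorem stmt_3 {V : Type*} [Fintype V] [DecidableEq V]
    (T : SimpleGraph V) [DecidableRel T.Adj] (hT : T.IsTree)
    (X : Finset V) (hleaf : ∀ v : V, T.degree v = 1 ↔ v ∈ X)
    (hdeg3 : ∀ v : V, v ∉ X → T.degree v = 3)
    (C : Finset (Finset V)) (hcard : ∀ S ∈ C, S.card = 3) (hunion : C.sup id = X)
    (f : Finset V → V)
    (hf : ∀ S ∈ C, isMedianOf T S (f S) ∧ f S ∉ X)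
    (hinj : ∀ S₁ ∈ C, ∀ S₂ ∈ C, f S₁ = f S₂ → S₁ = S₂) :
    ∀ C' ⊆ C, C'.Nonempty → (C'.sup id).card ≥ C'.card + 2 :=
  stmt_3_general T hT X C hcard hunion f hf hinj
end

section
/- Let X be finite and 𝒞 ⊆ binom(X,3) with ∪𝒞 = X satisfy |∪𝒞'| ≥ |𝒞'| + 2 for all nonempty 𝒞' ⊆ 𝒞. Let x ∈ X lie in exactly the two triples {a,b,x}, {a,b',x} ∈ 𝒞 with b ≠ b'. Then 𝒞₁ := (𝒞 − {{a,b,x},{a,b',x}}) ∪ {{a,b,b'}} satisfies ∪𝒞₁ = X − {x} and |∪𝒟| ≥ |𝒟| + 2 for all nonempty 𝒟 ⊆ 𝒞₁. -/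
/-!
Replacing the two triples through `x` by `{a, b, b'}` removes exactly the point `x` from every
union: `{a, b, x} ∪ {a, b', x} = insert x {a, b, b'}`. So a subfamily `D` of the new family
containing `{a, b, b'}` corresponds to the subfamily `D'` of `C` in which `{a, b, b'}` is traded
back for the two triples; `D'` has one more member and one more point than `D`, and the surplus
inequality for `D'` yields the one for `D`.
-/

namespace Finset

variable {α : Type*} [DecidableEq α]

theorem ne_of_card_eq_three {a b c : α} (h : ({a, b, c} : Finset α).card = 3) :
    a ≠ b ∧ a ≠ c ∧ b ≠ c := by
  refine ⟨?_, ?_, ?_⟩ <;> rintro rfl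
  · have := card_le_two (a := a) (b := c)
    simp_all
  · have := card_le_two (a := a) (b := b)
    simp_all [pair_comm]
  · have := card_le_two (a := a) (b := b)
    simp_all

section Replace

variable {C : Finset (Finset α)} {T₀ T₁ T₂ : Finset α} {x : α}

theorem sup_id_insert_insert_of_union_eq_insert (h : T₁ ∪ T₂ = insert x T₀)
    (E : Finset (Finset α)) :
    (insert T₁ (insert T₂ E)).sup id = insert x ((insert T₀ E).sup id) := by
  simp only [sup_insert, id_eq, sup_eq_union, ← union_assoc, h, insert_union]

theorem notMem_sup_id_insert_erase_erase (hx : ∀ S ∈ C, x ∈ S → S = T₁ ∨ S = T₂)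
    (hxT₀ : x ∉ T₀) : x ∉ (insert T₀ ((C.erase T₁).erase T₂)).sup id := by
  simp only [mem_sup, mem_insert, mem_erase, id_eq, not_exists, not_and]
  rintro S (rfl | ⟨hS₂, hS₁, hSC⟩) hxS
  · exact hxT₀ hxS
  · rcases hx S hSC hxS with h | h
    exacts [hS₁ h, hS₂ h]

theorem sup_id_insert_erase_erase (hT₁ : T₁ ∈ C) (hT₂ : T₂ ∈ C) (h₁₂ : T₁ ≠ T₂)
    (hunion : T₁ ∪ T₂ = insert x T₀) (hx : ∀ S ∈ C, x ∈ S → S = T₁ ∨ S = T₂) (hxT₀ : x ∉ T₀) :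
    (insert T₀ ((C.erase T₁).erase T₂)).sup id = (C.sup id).erase x := by
  have hC : C = insert T₁ (insert T₂ ((C.erase T₁).erase T₂)) := by
    rw [insert_erase (mem_erase.2 ⟨h₁₂.symm, hT₂⟩), insert_erase hT₁]
  rw [hC, sup_id_insert_insert_of_union_eq_insert hunion, ← hC,
    erase_insert (notMem_sup_id_insert_erase_erase hx hxT₀)]

theorem card_add_le_card_sup_id_of_subset_insert_erase_erase {k : ℕ}
    (hall : ∀ C' ⊆ C, C'.Nonempty → (C'.sup id).card ≥ C'.card + k)
    (hT₁ : T₁ ∈ C) (hT₂ : T₂ ∈ C) (h₁₂ : T₁ ≠ T₂) (hunion : T₁ ∪ T₂ = insert x T₀)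
    (hx : ∀ S ∈ C, x ∈ S → S = T₁ ∨ S = T₂) (hxT₀ : x ∉ T₀)
    {D : Finset (Finset α)} (hD : D ⊆ insert T₀ ((C.erase T₁).erase T₂)) (hDne : D.Nonempty) :
    (D.sup id).card ≥ D.card + k := by
  have hE : D.erase T₀ ⊆ (C.erase T₁).erase T₂ := subset_insert_iff.1 hD
  have hrestC : (C.erase T₁).erase T₂ ⊆ C := (erase_subset _ _).trans (erase_subset _ _)
  by_cases hT₀ : T₀ ∈ D
  case neg =>
    rw [← erase_eq_of_notMem hT₀] at hDne ⊢
    exact hall _ (hE.trans hrestC) hDne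
  set D' := insert T₁ (insert T₂ (D.erase T₀))
  have hD'C : D' ⊆ C := insert_subset hT₁ (insert_subset hT₂ (hE.trans hrestC))
  have hT₂E : T₂ ∉ D.erase T₀ := fun h ↦ (mem_erase.1 (hE h)).1 rfl
  have hT₁E : T₁ ∉ insert T₂ (D.erase T₀) := by
    rw [mem_insert, not_or]
    exact ⟨h₁₂, fun h ↦ (mem_erase.1 (mem_erase.1 (hE h)).2).1 rfl⟩
  have hcard : D'.card = D.card + 1 := by
    rw [card_insert_of_notMem hT₁E, card_insert_of_notMem hT₂E, ← card_erase_add_one hT₀]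
  have hsup : D'.sup id = insert x (D.sup id) := by
    rw [sup_id_insert_insert_of_union_eq_insert hunion, insert_erase hT₀]
  have hxD : x ∉ D.sup id := fun h ↦
    notMem_sup_id_insert_erase_erase hx hxT₀ (sup_mono hD (f := id) h)
  have := hall D' hD'C (insert_nonempty _ _)
  rw [hsup, card_insert_of_notMem hxD, hcard] at this
  omega

end Replace

end Finset

theorem stmt_7_general {α : Type*} [DecidableEq α] (X : Finset α) (C : Finset (Finset α))
    (hcard : ∀ S ∈ C, S.card = 3) (hunion : C.sup id = X)
    (hall : ∀ C' ⊆ C, C'.Nonempty → (C'.sup id).card ≥ C'.card + 2)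
    (x a b b' : α) (hbb' : b ≠ b')
    (hm1 : ({a, b, x} : Finset α) ∈ C) (hm2 : ({a, b', x} : Finset α) ∈ C)
    (huniq : ∀ S ∈ C, x ∈ S → S = {a, b, x} ∨ S = {a, b', x}) :
    (((C.erase {a, b, x}).erase {a, b', x} ∪ {({a, b, b'} : Finset α)}).sup id = X.erase x) ∧
    ∀ D ⊆ (C.erase {a, b, x}).erase {a, b', x} ∪ {({a, b, b'} : Finset α)},
      D.Nonempty → (D.sup id).card ≥ D.card + 2 := by
  obtain ⟨hab, hax, hbx⟩ := Finset.ne_of_card_eq_three (hcard _ hm1)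
  obtain ⟨-, -, hb'x⟩ := Finset.ne_of_card_eq_three (hcard _ hm2)
  have hxT₀ : x ∉ ({a, b, b'} : Finset α) := by simp [hax.symm, hbx.symm, hb'x.symm]
  have h₁₂ : ({a, b, x} : Finset α) ≠ {a, b', x} := fun h ↦ by
    have : b ∈ ({a, b', x} : Finset α) := h ▸ by simp
    simp [hab.symm, hbb', hbx] at this
  have hpair : ({a, b, x} : Finset α) ∪ {a, b', x} = insert x {a, b, b'} := by
    ext; simp only [Finset.mem_union, Finset.mem_insert, Finset.mem_singleton]; tauto
  rw [Finset.union_singleton, ← hunion]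
  exact ⟨Finset.sup_id_insert_erase_erase hm1 hm2 h₁₂ hpair huniq hxT₀,
    fun D hD ↦ Finset.card_add_le_card_sup_id_of_subset_insert_erase_erase hall hm1 hm2 h₁₂
      hpair huniq hxT₀ hD⟩

theorem stmt_7 {α : Type*} [DecidableEq α] (X : Finset α) (C : Finset (Finset α))
    (hcard : ∀ S ∈ C, S.card = 3) (hunion : C.sup id = X)
    (hall : ∀ C' ⊆ C, C'.Nonempty → (C'.sup id).card ≥ C'.card + 2)
    (x a b b' : α) (hx : x ∈ X) (hbb' : b ≠ b')
    (hm1 : ({a, b, x} : Finset α) ∈ C) (hm2 : ({a, b', x} : Finset α) ∈ C)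
    (huniq : ∀ S ∈ C, x ∈ S → S = {a, b, x} ∨ S = {a, b', x}) :
    (((C.erase {a, b, x}).erase {a, b', x} ∪ {({a, b, b'} : Finset α)}).sup id = X.erase x) ∧
    ∀ D ⊆ (C.erase {a, b, x}).erase {a, b', x} ∪ {({a, b, b'} : Finset α)},
      D.Nonempty → (D.sup id).card ≥ D.card + 2 :=
  stmt_7_general X C hcard hunion hall x a b b' hbb' hm1 hm2 huniq
end

section
/- Let X be finite and 𝒞 ⊆ binom(X,3) with ∪𝒞 = X satisfy |∪𝒞'| ≥ |𝒞'| + 2 for all nonempty 𝒞' ⊆ 𝒞. Let x ∈ X lie in exactly the two triples {a,b,x}, {a',b',x} ∈ 𝒞 with {a,b} ∩ {a',b'} = ∅. Set 𝒞' := 𝒞 − {{a,b,x},{a',b',x}}, 𝒞₁ := 𝒞' ∪ {{a,a',b}}, 𝒞₂ := 𝒞' ∪ {{a,a',b'}}. Then at least one of 𝒞₁, 𝒞₂ satisfies the condition |∪𝒟| ≥ |𝒟| + 2 for all nonempty subcollections 𝒟 of it. -/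
/-!
If both exchanges failed, there would be deficient subfamilies `D ∋ T₁` and `D' ∋ T₂`. Since
`𝒟 ↦ |⋃𝒟| - |𝒟|` is submodular and `D ∩ D'` has surplus `k` (it lies in the original family, or it
is empty while `⋃D ∩ ⋃D'` still contains `T₁ ∩ T₂`), the union `D ∪ D'` falls short of surplus `k`
by at least two. Swapping `T₁, T₂` back for `M₁, M₂` then gives a subfamily of the original family
that is no smaller and covers at most one more point, `x`: it is deficient, a contradiction.
-/

open Finset

section

variable {α : Type*} [DecidableEq α]

def HasSurplus (k : ℕ) (C : Finset (Finset α)) : Prop :=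
  ∀ D ⊆ C, D.Nonempty → (D.sup id).card ≥ D.card + k

namespace HasSurplus

variable {k : ℕ} {C : Finset (Finset α)}

theorem mono {C' : Finset (Finset α)} (hC : HasSurplus k C) (hC' : C' ⊆ C) : HasSurplus k C' :=
  fun D hD => hC D (hD.trans hC')

theorem exists_deficient_mem {T : Finset α} (hC : HasSurplus k C)
    (hCT : ¬ HasSurplus k (C ∪ {T})) :
    ∃ D ⊆ C ∪ {T}, T ∈ D ∧ (D.sup id).card < D.card + k := by
  simp only [HasSurplus, not_forall, not_le] at hCT
  obtain ⟨D, hD, hne, hlt⟩ := hCT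
  refine ⟨D, hD, ?_, hlt⟩
  by_contra hT
  have hDC : D ⊆ C := fun S hS => by
    simpa [hT, ne_of_mem_of_not_mem hS hT] using hD hS
  exact (hC D hDC hne).not_gt hlt

theorem card_inter_add_le_card_sup_inter {D D' : Finset (Finset α)} {T₁ T₂ : Finset α}
    (hC : HasSurplus k C) (hD : D ⊆ C ∪ {T₁}) (hD' : D' ⊆ C ∪ {T₂}) (hT : T₁ ≠ T₂)
    (hT₁ : T₁ ∈ D) (hT₂ : T₂ ∈ D') (hcommon : k ≤ (T₁ ∩ T₂).card) :
    (D ∩ D').card + k ≤ (D.sup id ∩ D'.sup id).card := by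
  rcases (D ∩ D').eq_empty_or_nonempty with hempty | hne
  · have : T₁ ∩ T₂ ⊆ D.sup id ∩ D'.sup id :=
      inter_subset_inter (le_sup (f := id) hT₁) (le_sup (f := id) hT₂)
    simpa [hempty] using hcommon.trans (card_le_card this)
  · have hsub : D ∩ D' ⊆ C := fun S hS => by
      obtain ⟨hSD, hSD'⟩ := mem_inter.mp hS
      have h₁ := mem_union.mp (hD hSD)
      have h₂ := mem_union.mp (hD' hSD')
      simp only [mem_singleton] at h₁ h₂
      rcases h₁ with h₁ | rfl
      · exact h₁
      · exact h₂.resolve_right hT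
    have hsup : (D ∩ D').sup id ⊆ D.sup id ∩ D'.sup id :=
      le_inf (sup_mono inter_subset_left) (sup_mono inter_subset_right)
    exact (hC _ hsub hne).trans (card_le_card hsup)

theorem exchange_or_exchange {M₁ M₂ T₁ T₂ : Finset α} {x : α} (hC : HasSurplus k C)
    (hM₁ : M₁ ∈ C) (hM₂ : M₂ ∈ C) (hM : M₁ ≠ M₂) (hT : T₁ ≠ T₂)
    (hMT₁ : M₁ ⊆ insert x T₁) (hMT₂ : M₂ ⊆ insert x T₂) (hcommon : k ≤ (T₁ ∩ T₂).card) :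
    HasSurplus k ((C.erase M₁).erase M₂ ∪ {T₁}) ∨
      HasSurplus k ((C.erase M₁).erase M₂ ∪ {T₂}) := by
  set C' := (C.erase M₁).erase M₂
  by_contra! hfail
  have hC'C : C' ⊆ C := (erase_subset _ _).trans (erase_subset _ _)
  have hC' : HasSurplus k C' := hC.mono hC'C
  obtain ⟨D, hD, hT₁D, hDlt⟩ := hC'.exists_deficient_mem hfail.1
  obtain ⟨D', hD', hT₂D', hD'lt⟩ := hC'.exists_deficient_mem hfail.2
  have hinter := hC'.card_inter_add_le_card_sup_inter hD hD' hT hT₁D hT₂D' hcommon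
  set R := (D ∪ D') \ {T₁, T₂}
  have hRC' : R ⊆ C' := fun S hS => by
    simp only [R, mem_sdiff, mem_union, mem_insert, mem_singleton, not_or] at hS
    rcases hS with ⟨hS | hS, hST₁, hST₂⟩
    · simpa [hST₁] using hD hS
    · simpa [hST₂] using hD' hS
  have hdisj : Disjoint R {M₁, M₂} := by
    refine disjoint_left.mpr fun S hS hSM => ?_
    have hSC' := hRC' hS
    simp only [mem_insert, mem_singleton] at hSM
    rcases hSM with rfl | rfl <;> simp [C'] at hSC'
  have hcard : (D ∪ D').card ≤ (R ∪ {M₁, M₂}).card := by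
    rw [card_union_of_disjoint hdisj, card_pair hM]
    exact (card_le_card_sdiff_add_card).trans (by gcongr; exact card_le_two)
  have hsup : (R ∪ {M₁, M₂}).sup id ⊆ insert x (D.sup id ∪ D'.sup id) := by
    have hR : R.sup id ⊆ D.sup id ∪ D'.sup id := (sup_mono sdiff_subset).trans sup_union.le
    have h₁ : M₁ ⊆ insert x (D.sup id ∪ D'.sup id) :=
      hMT₁.trans (insert_subset_insert _ ((le_sup (f := id) hT₁D).trans subset_union_left))
    have h₂ : M₂ ⊆ insert x (D.sup id ∪ D'.sup id) :=
      hMT₂.trans (insert_subset_insert _ ((le_sup (f := id) hT₂D').trans subset_union_right))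
    rw [sup_union, sup_insert, sup_singleton]
    exact union_subset (hR.trans (subset_insert _ _)) (union_subset h₁ h₂)
  have hEC : R ∪ {M₁, M₂} ⊆ C :=
    union_subset (hRC'.trans hC'C) (by simp [insert_subset_iff, hM₁, hM₂])
  have hE := hC _ hEC ⟨M₁, by simp⟩
  have hsupcard := (card_le_card hsup).trans (card_insert_le _ _)
  have hunion := card_union_add_card_inter D D'
  have hunion_sup := card_union_add_card_inter (D.sup id) (D'.sup id)
  omega

end HasSurplus

end

theorem stmt_8_general {α : Type*} [DecidableEq α] (C : Finset (Finset α))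
    (hcard : ∀ S ∈ C, S.card = 3)
    (hall : ∀ C' ⊆ C, C'.Nonempty → (C'.sup id).card ≥ C'.card + 2)
    (x a b a' b' : α)
    (hdisj : ({a, b} : Finset α) ∩ ({a', b'} : Finset α) = ∅)
    (hm1 : ({a, b, x} : Finset α) ∈ C) (hm2 : ({a', b', x} : Finset α) ∈ C) :
    (∀ D ⊆ (C.erase {a, b, x}).erase {a', b', x} ∪ {({a, a', b} : Finset α)},
      D.Nonempty → (D.sup id).card ≥ D.card + 2) ∨
    (∀ D ⊆ (C.erase {a, b, x}).erase {a', b', x} ∪ {({a, a', b'} : Finset α)},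
      D.Nonempty → (D.sup id).card ≥ D.card + 2) := by
  have hab : a ≠ b := by
    rintro rfl
    have h3 := hcard _ hm1
    rw [insert_eq_of_mem (mem_insert_self a _)] at h3
    have := card_le_two (a := a) (b := x)
    omega
  rw [← disjoint_iff_inter_eq_empty] at hdisj
  simp only [disjoint_insert_left, disjoint_singleton_left, mem_insert, mem_singleton,
    not_or] at hdisj
  obtain ⟨⟨haa', hab'⟩, hba', hbb'⟩ := hdisj
  refine HasSurplus.exchange_or_exchange (x := x) hall hm1 hm2 ?_ ?_ ?_ ?_ ?_
  · intro h
    have ha : a ∈ ({a', b', x} : Finset α) := h ▸ mem_insert_self _ _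
    have hb : b ∈ ({a', b', x} : Finset α) := h ▸ by simp
    simp only [mem_insert, mem_singleton] at ha hb
    grind
  · intro h
    have hb : b ∈ ({a, a', b'} : Finset α) := h ▸ by simp
    simp only [mem_insert, mem_singleton] at hb
    grind
  · intro y; simp only [mem_insert, mem_singleton]; tauto
  · intro y; simp only [mem_insert, mem_singleton]; tauto
  · have hsub : ({a, a'} : Finset α) ⊆ {a, a', b} ∩ {a, a', b'} := by
      intro y; simp only [mem_inter, mem_insert, mem_singleton]; tauto
    exact (card_pair haa').ge.trans (card_le_card hsub)

theorem stmt_8 {α : Type*} [DecidableEq α] (X : Finset α) (C : Finset (Finset α))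
    (hcard : ∀ S ∈ C, S.card = 3) (hunion : C.sup id = X)
    (hall : ∀ C' ⊆ C, C'.Nonempty → (C'.sup id).card ≥ C'.card + 2)
    (x a b a' b' : α) (hx : x ∈ X)
    (hdisj : ({a, b} : Finset α) ∩ ({a', b'} : Finset α) = ∅)
    (hm1 : ({a, b, x} : Finset α) ∈ C) (hm2 : ({a', b', x} : Finset α) ∈ C)
    (huniq : ∀ S ∈ C, x ∈ S → S = {a, b, x} ∨ S = {a', b', x}) :
    (∀ D ⊆ (C.erase {a, b, x}).erase {a', b', x} ∪ {({a, a', b} : Finset α)},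
      D.Nonempty → (D.sup id).card ≥ D.card + 2) ∨
    (∀ D ⊆ (C.erase {a, b, x}).erase {a', b', x} ∪ {({a, a', b'} : Finset α)},
      D.Nonempty → (D.sup id).card ≥ D.card + 2) :=
  stmt_8_general C hcard hall x a b a' b' hdisj hm1 hm2
end

section
/- Let X be a finite set and 𝒞 a collection of subsets of X, each of size at least 3, with ∪𝒞 = X, satisfying: for every nonempty 𝒞' ⊆ 𝒞, |∪𝒞'| − 2 ≥ Σ_{Y ∈ 𝒞'}(|Y| − 2). For each Y ∈ 𝒞 with Y = {y₁,…,y_m}, let 𝒞_Y := {{y₁,y₂,y₃}, {y₁,y₂,y₄}, …, {y₁,y₂,y_m}}. Then 𝒞_* := ∪_{Y ∈ 𝒞} 𝒞_Y is a collection of 3-element subsets of X satisfying |∪𝒟| ≥ |𝒟| + 2 for every nonempty 𝒟 ⊆ 𝒞_*. -/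
/-!
Fix `D ⊆ 𝒞_*` and let `𝒞'` be the members `Y` of `𝒞` whose fan `𝒞_Y` meets `D`. The triples of
`𝒞_Y ∩ D` all contain the two apexes `y₁, y₂` and have distinct third points, so `∪D` contains at
least `2 + |𝒞_Y ∩ D|` points of `Y`; hence `|Y \ ∪D| ≤ |Y| - 2 - |𝒞_Y ∩ D|`. Summing over `𝒞'` and
applying the hypothesis to `𝒞'` gives
`|D| + 2 ≤ ∑_{Y ∈ 𝒞'} (|Y| - 2) + 2 - ∑_{Y ∈ 𝒞'} |Y \ ∪D| ≤ |∪𝒞'| - ∑_{Y ∈ 𝒞'} |Y \ ∪D| ≤ |∪D|`.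
-/

section

open Finset

variable {α : Type*} [DecidableEq α]

/-- For `a = y₁`, `b = y₂` this is `𝒞_Y`. -/
def fan (a b : α) (Y : Finset α) : Finset (Finset α) :=
  (Y \ {a, b}).image fun y => {a, b, y}

section

variable {a b : α} {Y S : Finset α}

theorem card_eq_three_of_mem_fan (hab : a ≠ b) (hS : S ∈ fan a b Y) : #S = 3 := by
  obtain ⟨y, hy, rfl⟩ := mem_image.mp hS
  have hy' : y ≠ a ∧ y ≠ b := by simpa [not_or] using (mem_sdiff.mp hy).2
  exact card_eq_three.mpr ⟨a, b, y, hab, hy'.1.symm, hy'.2.symm, rfl⟩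

theorem subset_of_mem_fan (ha : a ∈ Y) (hb : b ∈ Y) (hS : S ∈ fan a b Y) : S ⊆ Y := by
  obtain ⟨y, hy, rfl⟩ := mem_image.mp hS
  simp only [insert_subset_iff, singleton_subset_iff]
  exact ⟨ha, hb, (mem_sdiff.mp hy).1⟩

theorem two_add_card_fan_inter_le {D : Finset (Finset α)} (hab : a ≠ b) (ha : a ∈ Y)
    (hb : b ∈ Y) (hD : (fan a b Y ∩ D).Nonempty) :
    2 + #(fan a b Y ∩ D) ≤ #(Y ∩ D.sup id) := by
  set W := (Y \ {a, b}).filter fun y => {a, b, y} ∈ D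
  have hW : fan a b Y ∩ D = W.image fun y => {a, b, y} := by
    rw [← filter_mem_eq_inter, fan, filter_image]
  have haW : a ∉ W := fun h => by simp [W] at h
  have hbW : b ∉ W := fun h => by simp [W] at h
  have hab_sup : a ∈ D.sup id ∧ b ∈ D.sup id := by
    obtain ⟨S, hS⟩ := hD
    obtain ⟨y, -, rfl⟩ := mem_image.mp (mem_inter.mp hS).1
    exact ⟨mem_sup.mpr ⟨_, (mem_inter.mp hS).2, by simp⟩,
      mem_sup.mpr ⟨_, (mem_inter.mp hS).2, by simp⟩⟩
  have hsub : insert a (insert b W) ⊆ Y ∩ D.sup id := by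
    simp only [insert_subset_iff, mem_inter]
    refine ⟨⟨ha, hab_sup.1⟩, ⟨hb, hab_sup.2⟩, fun y hy => ?_⟩
    obtain ⟨hyY, hyD⟩ := mem_filter.mp hy
    exact mem_inter.mpr ⟨(mem_sdiff.mp hyY).1, mem_sup.mpr ⟨_, hyD, by simp⟩⟩
  calc 2 + #(fan a b Y ∩ D) ≤ 2 + #W := by rw [hW]; exact Nat.add_le_add_left card_image_le 2
    _ = #(insert a (insert b W)) := by
      rw [card_insert_of_notMem (by simp [hab, haW]), card_insert_of_notMem hbW]; ring
    _ ≤ #(Y ∩ D.sup id) := card_le_card hsub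

end

theorem card_sup_le_card_add_sum_card_sdiff {ι : Type*} (s : Finset ι) (f : ι → Finset α)
    (U : Finset α) : #(s.sup f) ≤ #U + ∑ i ∈ s, #(f i \ U) :=
  calc #(s.sup f) ≤ #(s.sup f \ U) + #U := card_le_card_sdiff_add_card
    _ = #(s.biUnion fun i => f i \ U) + #U := by rw [← Finset.sup_sdiff_right, sup_eq_biUnion]
    _ ≤ ∑ i ∈ s, #(f i \ U) + #U := Nat.add_le_add_right card_biUnion_le _
    _ = #U + ∑ i ∈ s, #(f i \ U) := add_comm _ _

/-- The family `𝒞_*`, where `p Y = (y₁, y₂)`. -/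
def fanUnion (C : Finset (Finset α)) (p : Finset α → α × α) : Finset (Finset α) :=
  C.biUnion fun Y => fan (p Y).1 (p Y).2 Y

theorem card_add_two_le_card_sup_of_subset_fanUnion {C : Finset (Finset α)}
    {p : Finset α → α × α} (hp : ∀ Y ∈ C, (p Y).1 ∈ Y ∧ (p Y).2 ∈ Y ∧ (p Y).1 ≠ (p Y).2)
    (hcond : ∀ C' ⊆ C, C'.Nonempty → (∑ Y ∈ C', (#Y - 2)) + 2 ≤ #(C'.sup id))
    {D : Finset (Finset α)} (hD : D ⊆ fanUnion C p) (hDne : D.Nonempty) :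
    #D + 2 ≤ #(D.sup id) := by
  set F := fun Y => fan (p Y).1 (p Y).2 Y
  set C' := C.filter fun Y => (F Y ∩ D).Nonempty
  have hcover : D ⊆ C'.biUnion fun Y => F Y ∩ D := by
    intro S hS
    obtain ⟨Y, hY, hSY⟩ := mem_biUnion.mp (hD hS)
    have hmem : S ∈ F Y ∩ D := mem_inter.mpr ⟨hSY, hS⟩
    exact mem_biUnion.mpr ⟨Y, mem_filter.mpr ⟨hY, S, hmem⟩, hmem⟩
  have hC'ne : C'.Nonempty := by
    obtain ⟨S, hS⟩ := hDne
    obtain ⟨Y, hY, -⟩ := mem_biUnion.mp (hcover hS)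
    exact ⟨Y, hY⟩
  have hlocal : ∀ Y ∈ C', #(F Y ∩ D) + #(Y \ D.sup id) ≤ #Y - 2 := by
    intro Y hY
    obtain ⟨hYC, hYD⟩ := mem_filter.mp hY
    obtain ⟨ha, hb, hab⟩ := hp Y hYC
    have h2 : 2 + #(F Y ∩ D) ≤ #(Y ∩ D.sup id) := two_add_card_fan_inter_le hab ha hb hYD
    have := card_inter_add_card_sdiff Y (D.sup id)
    omega
  refine Nat.le_of_add_le_add_right (b := ∑ Y ∈ C', #(Y \ D.sup id)) ?_
  calc #D + 2 + ∑ Y ∈ C', #(Y \ D.sup id)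
      ≤ ∑ Y ∈ C', #(F Y ∩ D) + ∑ Y ∈ C', #(Y \ D.sup id) + 2 := by
        have := (card_le_card hcover).trans card_biUnion_le; omega
    _ ≤ ∑ Y ∈ C', (#Y - 2) + 2 := by
        rw [← sum_add_distrib]; exact Nat.add_le_add_right (sum_le_sum hlocal) 2
    _ ≤ #(C'.sup id) := hcond C' (filter_subset _ _) hC'ne
    _ ≤ #(D.sup id) + ∑ Y ∈ C', #(Y \ D.sup id) :=
        card_sup_le_card_add_sum_card_sdiff C' id (D.sup id)

end

theorem stmt_13_general {α : Type*} [DecidableEq α] (X : Finset α) (C : Finset (Finset α))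
    (hunion : C.sup id = X)
    (hcond : ∀ C' ⊆ C, C'.Nonempty →
      (∑ Y ∈ C', (Y.card - 2)) + 2 ≤ (C'.sup id).card)
    (p : Finset α → α × α)
    (hp : ∀ Y ∈ C, (p Y).1 ∈ Y ∧ (p Y).2 ∈ Y ∧ (p Y).1 ≠ (p Y).2) :
    (∀ S ∈ C.biUnion (fun Y => (Y \ {(p Y).1, (p Y).2}).image
        (fun y => ({(p Y).1, (p Y).2, y} : Finset α))), S.card = 3 ∧ S ⊆ X) ∧
    ∀ D ⊆ C.biUnion (fun Y => (Y \ {(p Y).1, (p Y).2}).image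
        (fun y => ({(p Y).1, (p Y).2, y} : Finset α))),
      D.Nonempty → (D.sup id).card ≥ D.card + 2 := by
  refine ⟨fun S hS => ?_, fun D hD hDne =>
    card_add_two_le_card_sup_of_subset_fanUnion hp hcond hD hDne⟩
  obtain ⟨Y, hY, hSY⟩ := Finset.mem_biUnion.mp hS
  obtain ⟨ha, hb, hab⟩ := hp Y hY
  have hYX : Y ⊆ X := hunion ▸ Finset.le_sup (f := id) hY
  exact ⟨card_eq_three_of_mem_fan hab hSY, (subset_of_mem_fan ha hb hSY).trans hYX⟩

theorem stmt_13 {α : Type*} [DecidableEq α] (X : Finset α) (C : Finset (Finset α))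
    (hcard : ∀ Y ∈ C, 3 ≤ Y.card) (hunion : C.sup id = X)
    (hcond : ∀ C' ⊆ C, C'.Nonempty →
      (∑ Y ∈ C', (Y.card - 2)) + 2 ≤ (C'.sup id).card)
    (p : Finset α → α × α)
    (hp : ∀ Y ∈ C, (p Y).1 ∈ Y ∧ (p Y).2 ∈ Y ∧ (p Y).1 ≠ (p Y).2) :
    (∀ S ∈ C.biUnion (fun Y => (Y \ {(p Y).1, (p Y).2}).image
        (fun y => ({(p Y).1, (p Y).2, y} : Finset α))), S.card = 3 ∧ S ⊆ X) ∧
    ∀ D ⊆ C.biUnion (fun Y => (Y \ {(p Y).1, (p Y).2}).image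
        (fun y => ({(p Y).1, (p Y).2, y} : Finset α))),
      D.Nonempty → (D.sup id).card ≥ D.card + 2 :=
  stmt_13_general X C hunion hcond p hp
end
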